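/- arXiv:2205.10831 — 9 statements merged into one kernel-verified Lean document; each statement's English description precedes it below -/
import Mathlib

section
/- Let U = (U_{≤0}, U_{≥0}) be a stable t-structure on a triangulated category T. Then U is regular if and only if T = U_{≤0} × U_{≥0}, that is: Hom(X, Y) = 0 for all X ∈ U_{≤0}, Y ∈ U_{≥0}, Hom(Y, X) = 0 for all Y ∈ U_{≥0}, X ∈ U_{≤0}, and every object Z of T is isomorphic to X ⊕ Y for some X ∈ U_{≤0} and Y ∈ U_{≥0}. -/
open CategoryTheory Category Limits Pretriangulated Triangulated

namespace TStructurePaper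

variable {C : Type*} [Category C] [Preadditive C] [HasZeroObject C]
  [HasShift C ℤ] [∀ (n : ℤ), (shiftFunctor C n).Additive] [Pretriangulated C]

/-- A t-structure is non-degenerate if every object of `⋂ₙ U_{≤n}` and every object
of `⋂ₙ U_{≥n}` is a zero object. -/
def IsNondegenerate (t : TStructure C) : Prop :=
  (∀ X : C, (∀ n : ℤ, t.le n X) → IsZero X) ∧
  (∀ X : C, (∀ n : ℤ, t.ge n X) → IsZero X)

/-- A t-structure is stable if `Σ U_{≤0} = U_{≤0}`. -/
def IsStable (t : TStructure C) : Prop :=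
  ∀ X : C, t.le 0 X ↔ t.le 0 (X⟦(1 : ℤ)⟧)

/-- A t-structure is hereditary if `Hom(U_{≥0}, U_{≤-2}) = 0`. -/
def IsHereditary (t : TStructure C) : Prop :=
  ∀ ⦃X Y : C⦄, t.ge 0 X → t.le (-2) Y → ∀ f : X ⟶ Y, f = 0

/-- `f` factors through some object satisfying the predicate `P`. -/
def FactorsThrough (P : C → Prop) {X Y : C} (f : X ⟶ Y) : Prop :=
  ∃ (Z : C) (_ : P Z) (u : X ⟶ Z) (v : Z ⟶ Y), f = u ≫ v

/-- A t-structure is regular if any morphism `f : X → Y` with `Y ∈ U_{≤m}` for some `m`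
which factors through an object of `U_{≥n}` for every `n` vanishes, and dually. -/
def IsRegular (t : TStructure C) : Prop :=
  (∀ ⦃X Y : C⦄, (∃ m : ℤ, t.le m Y) → ∀ f : X ⟶ Y,
      (∀ n : ℤ, FactorsThrough (t.ge n) f) → f = 0) ∧
  (∀ ⦃X Y : C⦄, (∃ m : ℤ, t.ge m X) → ∀ f : X ⟶ Y,
      (∀ n : ℤ, FactorsThrough (t.le n) f) → f = 0)

/-- `Hom(U_{≥0}, U_{≤-(d+1)}) = 0`. -/
def HasGlDimAtMost (t : TStructure C) (d : ℕ) : Prop :=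
  ∀ ⦃X Y : C⦄, t.ge 0 X → t.le (-(d + 1)) Y → ∀ f : X ⟶ Y, f = 0

/-- The global dimension of a t-structure, as an element of `ℕ∞`. -/
noncomputable def glDim (t : TStructure C) : ℕ∞ :=
  sInf {e : ℕ∞ | ∃ d : ℕ, e = d ∧ HasGlDimAtMost t d}

/-- `d(U,V) ≤ d`, i.e. `V_{≤m} ⊆ U_{≤0} ⊆ V_{≤m+d}` for some integer `m`. -/
def DistAtMost (u v : TStructure C) (d : ℕ) : Prop :=
  ∃ m : ℤ, (∀ X : C, v.le m X → u.le 0 X) ∧ (∀ X : C, u.le 0 X → v.le (m + d) X)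

/-- The distance between two t-structures, as an element of `ℕ∞`. -/
noncomputable def dist (u v : TStructure C) : ℕ∞ :=
  sInf {e : ℕ∞ | ∃ d : ℕ, e = d ∧ DistAtMost u v d}

/-- Membership of the subcategory `U_ℕ = ⋃_{n ≥ 0} U_{[-n, n]}`. -/
def InUN (t : TStructure C) (X : C) : Prop :=
  ∃ n : ℕ, t.ge (-(n : ℤ)) X ∧ t.le (n : ℤ) X

/-- A t-structure is bounded if `⋃ₙ U_{≤n} = T = ⋃ₙ U_{≥n}`. -/
def IsBounded (t : TStructure C) : Prop :=
  (∀ X : C, ∃ n : ℤ, t.le n X) ∧ (∀ X : C, ∃ n : ℤ, t.ge n X)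

/-- Membership of the heart `U₀ = U_{≤0} ∩ U_{≥0}`. -/
def InHeart (t : TStructure C) (X : C) : Prop :=
  t.le 0 X ∧ t.ge 0 X

/-- Truncation data for a t-structure: functors `τ_{≤n}` right adjoint to the inclusions
`U_{≤n} ↪ T` (with counit `ι`) and functors `τ_{≥n}` left adjoint to the inclusions
`U_{≥n} ↪ T` (with unit `π`). -/
structure TruncData (t : TStructure C) where
  τle (n : ℤ) : C ⥤ C
  τge (n : ℤ) : C ⥤ C
  ι (n : ℤ) : τle n ⟶ 𝟭 C
  π (n : ℤ) : 𝟭 C ⟶ τge n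
  le_mem (n : ℤ) (X : C) : t.le n ((τle n).obj X)
  ge_mem (n : ℤ) (X : C) : t.ge n ((τge n).obj X)
  le_adj (n : ℤ) (A X : C) (hA : t.le n A) :
    Function.Bijective (fun g : A ⟶ (τle n).obj X => g ≫ (ι n).app X)
  ge_adj (n : ℤ) (X B : C) (hB : t.ge n B) :
    Function.Bijective (fun g : (τge n).obj X ⟶ B => (π n).app X ≫ g)

/-- The cohomological functor `Hⁿ = Σⁿ ∘ τ_{≤n} ∘ τ_{≥n}` associated to a t-structure. -/
def TruncData.H {t : TStructure C} (d : TruncData t) (n : ℤ) : C ⥤ C :=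
  d.τge n ⋙ d.τle n ⋙ shiftFunctor C n

/-!
Stability forces `U_{≤n} = U_{≤0}` for every `n`, hence also `U_{≥n} = U_{≥0}`, since `U_{≥n}` is
the right orthogonal of `U_{≤n-1}`. So `Hom(U_{≤0}, U_{≥0}) = 0` holds for free, and regularity
amounts to `Hom(U_{≥0}, U_{≤0}) = 0`. That vanishing kills the connecting morphism
`Y → ΣX` of the truncation triangle `X → Z → Y → ΣX`, which therefore splits: `Z ≅ X ⊕ Y`.
-/

namespace IsStable

variable {t : TStructure C}

lemma le_succ_eq (hs : IsStable t) (n : ℤ) : t.le (n + 1) = t.le n := by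
  refine le_antisymm (fun X hX => ?_) (t.le_monotone (by omega))
  rw [← t.shift_le n 0 n (add_zero n), ObjectProperty.prop_shift_iff, hs (X⟦n⟧)]
  rw [← t.shift_le n 1 (n + 1) rfl, ObjectProperty.prop_shift_iff] at hX
  exact t.le_shift 1 1 0 (by omega) _ hX

lemma le_eq (hs : IsStable t) (n : ℤ) : t.le n = t.le 0 := by
  induction n with
  | zero => rfl
  | succ i ih => rw [hs.le_succ_eq, ih]
  | pred i ih => rw [← ih, ← hs.le_succ_eq (-i - 1), sub_add_cancel]

lemma le_iff (hs : IsStable t) (a b : ℤ) (X : C) : t.le a X ↔ t.le b X := by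
  rw [hs.le_eq a, hs.le_eq b]

lemma ge_iff (hs : IsStable t) (n : ℤ) (X : C) :
    t.ge n X ↔ ∀ ⦃Y : C⦄, t.le 0 Y → ∀ f : Y ⟶ X, f = 0 := by
  rw [t.ge_iff_isGE, t.isGE_iff_orthogonal (n - 1) n (by omega)]
  simp only [← t.le_iff_isLE, hs.le_iff (n - 1) 0]
  exact ⟨fun h Y hY f => h Y f hY, fun h Y f hY => h hY f⟩

lemma ge_of_ge (hs : IsStable t) {a : ℤ} (b : ℤ) {X : C} (hX : t.ge a X) : t.ge b X :=
  (hs.ge_iff b X).2 ((hs.ge_iff a X).1 hX)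

lemma hom_eq_zero (hs : IsStable t) {X Y : C} {a b : ℤ} (hX : t.le a X) (hY : t.ge b Y)
    (f : X ⟶ Y) : f = 0 :=
  (hs.ge_iff b Y).1 hY ((hs.le_iff a 0 X).1 hX) f

end IsStable

lemma exists_iso_biprod_of_hom_ge_le_eq_zero (t : TStructure C)
    (h : ∀ ⦃Y X : C⦄, t.ge 1 Y → t.le (-1) X → ∀ f : Y ⟶ X, f = 0) (Z : C) :
    ∃ (X Y : C) (_ : t.le 0 X) (_ : t.ge 1 Y), Nonempty (Z ≅ X ⊞ Y) := by
  obtain ⟨X, Y, hX, hY, f, g, δ, mem⟩ := t.exists_triangle_zero_one Z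
  have hδ : δ = 0 := h hY (t.le_shift 0 1 (-1) (by omega) X hX) δ
  obtain ⟨e, -, -⟩ := exists_iso_binaryBiproduct_of_distTriang _ mem hδ
  exact ⟨X, Y, hX, hY, ⟨e⟩⟩

/-- A stable t-structure `U` is regular if and only if `T = U_{≤0} × U_{≥0}`. -/
theorem statement2 (t : TStructure C) (hs : IsStable t) :
    IsRegular t ↔
      ((∀ ⦃X Y : C⦄, t.le 0 X → t.ge 0 Y → ∀ f : X ⟶ Y, f = 0) ∧
       (∀ ⦃Y X : C⦄, t.ge 0 Y → t.le 0 X → ∀ f : Y ⟶ X, f = 0) ∧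
       (∀ Z : C, ∃ (X Y : C) (_ : t.le 0 X) (_ : t.ge 0 Y), Nonempty (Z ≅ X ⊞ Y))) := by
  constructor
  · rintro ⟨hreg, -⟩
    have hGL : ∀ ⦃Y X : C⦄, t.ge 0 Y → t.le 0 X → ∀ f : Y ⟶ X, f = 0 := fun Y X hY hX f =>
      hreg ⟨0, hX⟩ f (fun n => ⟨Y, hs.ge_of_ge n hY, 𝟙 Y, f, (id_comp f).symm⟩)
    refine ⟨fun X Y hX hY f => hs.hom_eq_zero hX hY f, hGL, fun Z => ?_⟩
    obtain ⟨X, Y, hX, hY, ⟨e⟩⟩ := exists_iso_biprod_of_hom_ge_le_eq_zero t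
      (fun Y X hY hX => hGL (hs.ge_of_ge 0 hY) ((hs.le_iff (-1) 0 X).1 hX)) Z
    exact ⟨X, Y, hX, hs.ge_of_ge 0 hY, ⟨e⟩⟩
  · rintro ⟨-, hGL, -⟩
    constructor
    · rintro X Y ⟨m, hm⟩ f hfac
      obtain ⟨Z, hZ, u, v, rfl⟩ := hfac 0
      rw [hGL hZ ((hs.le_iff m 0 Y).1 hm) v, comp_zero]
    · rintro X Y ⟨m, hm⟩ f hfac
      obtain ⟨Z, hZ, u, v, rfl⟩ := hfac 0
      rw [hGL (hs.ge_of_ge 0 hm) hZ u, zero_comp]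

end TStructurePaper
end

section
/- A t-structure U on a triangulated category T is hereditary if and only if every object Z of T is isomorphic to X ⊕ Y for some X ∈ U_{≤0} and some Y ∈ U_{≥1}. -/
/-! If `U` is hereditary, the connecting morphism `Y → X⟦1⟧` of the truncation triangle
`X → Z → Y → X⟦1⟧` lies in `Hom(U_{≥1}, U_{≤-1}) = 0`, so the triangle splits.
Conversely, any morphism `B → A⟦1⟧` with `A ∈ U_{≤0}` and `B ∈ U_{≥1}` is the connecting
morphism of a triangle `A → Z → B → A⟦1⟧`. If `Z ≅ X ⊕ Y` with `X ∈ U_{≤0}`, `Y ∈ U_{≥1}`,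
orthogonality makes the projection `Z → Y` and the map `Z → B` factor through each other;
the defect of the resulting candidate section of `Z → B` factors through `A⟦1⟧ → B`, which
vanishes, so `Z → B` is a split epimorphism and the connecting morphism is zero. -/

open CategoryTheory Category Limits Pretriangulated Triangulated

namespace TStructurePaper

variable {C : Type*} [Category C] [Preadditive C] [HasZeroObject C]
  [HasShift C ℤ] [∀ (n : ℤ), (shiftFunctor C n).Additive] [Pretriangulated C]

def HomVanishing (t : TStructure C) (n m : ℤ) : Prop :=
  ∀ ⦃X Y : C⦄, t.ge n X → t.le m Y → ∀ f : X ⟶ Y, f = 0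

lemma HomVanishing.shift {t : TStructure C} {n m : ℤ} (h : HomVanishing t n m)
    (a n' m' : ℤ) (hn : n' + a = n) (hm : m' + a = m) : HomVanishing t n' m' := by
  intro X Y hX hY f
  refine (shiftFunctor C (-a)).map_eq_zero_iff.mp (h ?_ ?_ _)
  · exact t.ge_shift n' (-a) n (by omega) X hX
  · exact t.le_shift m' (-a) m (by omega) Y hY

lemma isHereditary_iff_homVanishing_one_neg_one (t : TStructure C) :
    IsHereditary t ↔ HomVanishing t 1 (-1) :=
  ⟨fun h ↦ HomVanishing.shift h (-1) 1 (-1) rfl rfl,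
    fun h ↦ h.shift 1 0 (-2) rfl rfl⟩

lemma mor₃_eq_zero_of_iso_biprod (t : TStructure C) (T : Triangle C) (hT : T ∈ distTriang C)
    (h₁ : t.le 0 T.obj₁) (h₃ : t.ge 1 T.obj₃) {X Y : C} (hX : t.le 0 X) (hY : t.ge 1 Y)
    (e : T.obj₂ ≅ X ⊞ Y) : T.mor₃ = 0 := by
  let p : T.obj₂ ⟶ Y := e.hom ≫ biprod.snd
  let i : Y ⟶ T.obj₂ := biprod.inr ≫ e.inv
  obtain ⟨q, hq⟩ : ∃ q : T.obj₃ ⟶ Y, p = T.mor₂ ≫ q :=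
    Triangle.yoneda_exact₂ T hT p (t.zero' _ h₁ hY)
  have hpi : T.mor₂ = p ≫ i ≫ T.mor₂ := by
    have hX₀ : biprod.inl ≫ e.inv ≫ T.mor₂ = 0 := t.zero' _ hX h₃
    rw [← cancel_epi e.inv]
    ext <;> simp [p, i, hX₀]
  have hsection : (q ≫ i) ≫ T.mor₂ = 𝟙 _ := by
    have hker : T.mor₂ ≫ (𝟙 _ - (q ≫ i) ≫ T.mor₂) = 0 := by
      rw [Preadditive.comp_sub, comp_id, ← assoc, ← assoc, ← hq, assoc, ← hpi, sub_self]
    obtain ⟨w, hw⟩ := Triangle.yoneda_exact₃ T hT _ hker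
    have hw₀ : w = 0 := t.zero' w
      (t.le_monotone (by omega) _ (t.le_shift 0 1 (-1) (by omega) _ h₁)) h₃
    rw [hw₀, comp_zero, sub_eq_zero] at hw
    exact hw.symm
  have : IsSplitEpi T.mor₂ := IsSplitEpi.mk' ⟨q ≫ i, hsection⟩
  exact Triangle.mor₃_eq_zero_of_epi₂ T hT inferInstance

lemma homVanishing_one_neg_one_of_forall_iso_biprod (t : TStructure C)
    (H : ∀ Z : C, ∃ (X Y : C) (_ : t.le 0 X) (_ : t.ge 1 Y), Nonempty (Z ≅ X ⊞ Y)) :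
    HomVanishing t 1 (-1) := by
  intro B A hB hA g
  let e : A⟦(-1 : ℤ)⟧⟦(1 : ℤ)⟧ ≅ A := (shiftFunctorCompIsoId C (-1) 1 (by omega)).app A
  obtain ⟨Z, _, _, hT⟩ := distinguished_cocone_triangle₂ (g ≫ e.inv)
  obtain ⟨X, Y, hX, hY, ⟨eZ⟩⟩ := H Z
  exact (Preadditive.IsIso.comp_right_eq_zero g e.inv).mp
    (mor₃_eq_zero_of_iso_biprod t _ hT (t.le_shift (-1) (-1) 0 (by omega) A hA) hB hX hY eZ)

/-- A t-structure `U` is hereditary if and only if every object `Z` is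
isomorphic to `X ⊕ Y` for some `X ∈ U_{≤0}` and `Y ∈ U_{≥1}`. -/
theorem statement4 (t : TStructure C) :
    IsHereditary t ↔
      ∀ Z : C, ∃ (X Y : C) (_ : t.le 0 X) (_ : t.ge 1 Y), Nonempty (Z ≅ X ⊞ Y) := by
  rw [isHereditary_iff_homVanishing_one_neg_one]
  refine ⟨fun h Z ↦ ?_, homVanishing_one_neg_one_of_forall_iso_biprod t⟩
  obtain ⟨X, Y, hX, hY, _, _, δ, hT⟩ := t.exists_triangle_zero_one Z
  have hδ : δ = 0 := h hY (t.le_shift 0 1 (-1) (by omega) X hX) δ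
  obtain ⟨e, -, -⟩ := exists_iso_binaryBiproduct_of_distTriang _ hT hδ
  exact ⟨X, Y, hX, hY, ⟨e⟩⟩

end TStructurePaper
end

section
/- Let U be a hereditary, non-degenerate t-structure on a triangulated category T satisfying the following condition: for every family {Aₙ | n ∈ ℤ} of objects of the heart U₀, the coproduct ∐_{n∈ℤ} Σ⁻ⁿAₙ and the product ∏_{n∈ℤ} Σ⁻ⁿAₙ exist in T, and the canonical morphism ∐_{n∈ℤ} Σ⁻ⁿAₙ → ∏_{n∈ℤ} Σ⁻ⁿAₙ is an isomorphism. Then every object Z of T is isomorphic to ∐_{n∈ℤ} Σ⁻ⁿHⁿ(Z). -/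
open CategoryTheory Category Limits Pretriangulated Triangulated

namespace TStructurePaper

variable {C : Type*} [Category C] [Preadditive C] [HasZeroObject C]
  [HasShift C ℤ] [∀ (n : ℤ), (shiftFunctor C n).Additive] [Pretriangulated C]

/-!
Since `U` is hereditary, the truncation triangle `τ_{≤n} Y → Y → τ_{≥n+1} Y → Σ τ_{≤n} Y` of
every object splits, so each `Sₙ = Σ⁻ⁿ Hⁿ(Z) ≅ τ_{≤n} τ_{≥n} Z` is a retract of `Z`, through
`sₙ : Sₙ → Z` and `qₙ : Z → Sₙ`. The composite `∐ Sₙ → Z → ∏ Sₙ` of the induced maps `α` and `β`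
has entries `sᵢ ≫ qⱼ`: these are identities for `i = j` and vanish for `i < j` by the t-structure
axioms and for `i ≥ j + 2` by heredity. As moreover `Hom(Sᵢ, Sᵢ₋₂) = 0`, the composite differs
from the canonical isomorphism `∐ Sₙ ≅ ∏ Sₙ` by a square-zero endomorphism, so it is invertible
and `α` is a split monomorphism. The cone of `α` is then a retract of `Z` annihilated by every
`qₙ`, so all of its cohomology vanishes and it is zero by non-degeneracy.
-/

lemma isIso_of_comp_proj_eq_of_ne_sub_one {D : Type*} [Category D] [Preadditive D]
    {S : ℤ → D} (hS : ∀ i j : ℤ, j + 2 ≤ i → ∀ g : S i ⟶ S j, g = 0)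
    {c : Cofan S} (hc : IsColimit c) {p : Fan S} (hp : IsLimit p)
    {φ f : c.pt ⟶ p.pt} [IsIso φ]
    (hφ : ∀ i j : ℤ, c.inj i ≫ φ ≫ p.proj j =
      if hij : i = j then eqToHom (by rw [hij]) else 0)
    (hf : ∀ i j : ℤ, j ≠ i - 1 → c.inj i ≫ f ≫ p.proj j = c.inj i ≫ φ ≫ p.proj j) :
    IsIso f := by
  set N : c.pt ⟶ c.pt := (f - φ) ≫ inv φ with hN
  obtain ⟨e, he⟩ : ∃ e : ∀ i, S i ⟶ S (i - 1), ∀ i, c.inj i ≫ N = e i ≫ c.inj (i - 1) := by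
    refine ⟨fun i => c.inj i ≫ (f - φ) ≫ p.proj (i - 1), fun i => ?_⟩
    rw [← cancel_mono φ]
    refine hp.hom_ext fun ⟨j⟩ => ?_
    change ((c.inj i ≫ N) ≫ φ) ≫ p.proj j =
      (((c.inj i ≫ (f - φ) ≫ p.proj (i - 1)) ≫ c.inj (i - 1)) ≫ φ) ≫ p.proj j
    simp only [hN, assoc, IsIso.inv_hom_id_assoc, hφ]
    by_cases hij : i - 1 = j
    · subst hij
      simp
    · simp only [dif_neg hij, comp_zero]
      rw [Preadditive.sub_comp, Preadditive.comp_sub, hf i j (Ne.symm hij), sub_self]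
  have hNN : N ≫ N = 0 := hc.hom_ext fun ⟨i⟩ => by
    change c.inj i ≫ N ≫ N = c.inj i ≫ 0
    rw [reassoc_of% he i, he (i - 1), ← assoc, hS i (i - 1 - 1) (by omega) (e i ≫ e (i - 1)),
      zero_comp, comp_zero]
  have : IsIso (𝟙 c.pt + N) :=
    (isUnit_iff_isIso (1 + show End c.pt from N)).1
      (IsNilpotent.isUnit_one_add ⟨2, by rw [pow_two]; exact hNN⟩)
  have hf_eq : f = (𝟙 c.pt + N) ≫ φ := by simp [hN]
  rw [hf_eq]
  infer_instance

lemma exists_section_of_retraction {X Y Z : C} {f : X ⟶ Y} {g : Y ⟶ Z} {h : Z ⟶ X⟦(1 : ℤ)⟧}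
    (hT : Triangle.mk f g h ∈ distTriang C) {ρ : Y ⟶ X} (hρ : f ≫ ρ = 𝟙 X) :
    ∃ w : Z ⟶ Y, w ≫ g = 𝟙 Z ∧ w ≫ ρ = 0 := by
  have : IsSplitMono f := .mk' ⟨ρ, hρ⟩
  have : Epi g :=
    Triangle.epi₂ _ hT (Triangle.mor₃_eq_zero_of_mono₁ _ hT (inferInstanceAs (Mono f)))
  have : IsSplitEpi g := isSplitEpi_of_epi g
  have hfg : f ≫ g = 0 := comp_distTriang_mor_zero₁₂ _ hT
  refine ⟨section_ g - section_ g ≫ ρ ≫ f, ?_, ?_⟩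
  · rw [Preadditive.sub_comp, assoc, assoc, hfg, comp_zero, comp_zero, sub_zero, IsSplitEpi.id]
  · rw [Preadditive.sub_comp, assoc, assoc, hρ, comp_id, sub_self]

section TStructure

variable {t : TStructure C}

lemma IsHereditary.eq_zero (hher : IsHereditary t) {a b : ℤ} (hab : b + 2 ≤ a) {X Y : C}
    (hX : t.ge a X) (hY : t.le b Y) (f : X ⟶ Y) : f = 0 := by
  apply (shiftFunctor C a).map_injective
  rw [Functor.map_zero]
  exact hher (t.ge_shift a a 0 (add_zero a) X hX)
    (t.le_monotone (show b - a ≤ -2 by omega) _ (t.le_shift b a (b - a) (by omega) Y hY)) _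

lemma InHeart.shift_neg {A : C} (hA : InHeart t A) (n : ℤ) :
    t.le n (A⟦-n⟧) ∧ t.ge n (A⟦-n⟧) :=
  ⟨t.le_shift 0 (-n) n (by omega) _ hA.1, t.ge_shift 0 (-n) n (by omega) _ hA.2⟩

lemma eq_of_mor₂_comp_eq {T : Triangle C} (hT : T ∈ distTriang C) {n : ℤ}
    (h₁ : t.le n T.obj₁) {V : C} (hV : t.ge n V) {x y : T.obj₃ ⟶ V}
    (h : T.mor₂ ≫ x = T.mor₂ ≫ y) : x = y := by
  obtain ⟨g, hg⟩ := T.yoneda_exact₃ hT (x - y) (by rw [Preadditive.comp_sub, h, sub_self])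
  have hg₀ : g = 0 := t.zero_of_isLE_of_isGE g (n - 1) n (by omega)
    ⟨t.le_shift n 1 (n - 1) (by omega) _ h₁⟩ ⟨hV⟩
  rwa [hg₀, comp_zero, sub_eq_zero] at hg

lemma eq_of_comp_mor₁_eq {T : Triangle C} (hT : T ∈ distTriang C) {n : ℤ}
    (h₃ : t.ge n T.obj₃) {V : C} (hV : t.le n V) {x y : V ⟶ T.obj₁}
    (h : x ≫ T.mor₁ = y ≫ T.mor₁) : x = y := by
  have hxy : (x - y) ≫ T.mor₁ = 0 := by rw [Preadditive.sub_comp, h, sub_self]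
  obtain ⟨g, hg⟩ := Triangle.coyoneda_exact₂ _ (inv_rot_of_distTriang _ hT) (x - y) hxy
  have hg₀ : g = 0 := t.zero_of_isLE_of_isGE g n (n + 1) (by omega)
    ⟨hV⟩ ⟨t.ge_shift n (-1) (n + 1) (by omega) _ h₃⟩
  rw [hg₀, zero_comp] at hg
  exact sub_eq_zero.1 hg

lemma comp_eq_dite_of_ne_sub_one (hher : IsHereditary t) {S : ℤ → C}
    (hS : ∀ n, t.le n (S n) ∧ t.ge n (S n)) {Z : C} {s : ∀ n, S n ⟶ Z} {q : ∀ n, Z ⟶ S n}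
    (hsq : ∀ n, s n ≫ q n = 𝟙 _) {i j : ℤ} (hne : j ≠ i - 1) :
    s i ≫ q j = if hij : i = j then eqToHom (by rw [hij]) else 0 := by
  rcases lt_trichotomy i j with hlt | rfl | hgt
  · rw [dif_neg hlt.ne]
    exact t.zero_of_isLE_of_isGE _ i j hlt ⟨(hS i).1⟩ ⟨(hS j).2⟩
  · simp [hsq]
  · rw [dif_neg hgt.ne']
    exact hher.eq_zero (by omega) (hS i).2 (hS j).1 _

namespace TruncData

variable (d : TruncData t)

lemma le_ext (n : ℤ) {A X : C} (hA : t.le n A) {g g' : A ⟶ (d.τle n).obj X}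
    (h : g ≫ (d.ι n).app X = g' ≫ (d.ι n).app X) : g = g' := (d.le_adj n A X hA).1 h

lemma exists_le_lift (n : ℤ) {A X : C} (hA : t.le n A) (f : A ⟶ X) :
    ∃ g : A ⟶ (d.τle n).obj X, g ≫ (d.ι n).app X = f := (d.le_adj n A X hA).2 f

lemma ge_ext (n : ℤ) {X B : C} (hB : t.ge n B) {g g' : (d.τge n).obj X ⟶ B}
    (h : (d.π n).app X ≫ g = (d.π n).app X ≫ g') : g = g' := (d.ge_adj n X B hB).1 h

lemma exists_ge_desc (n : ℤ) {X B : C} (hB : t.ge n B) (f : X ⟶ B) :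
    ∃ g : (d.τge n).obj X ⟶ B, (d.π n).app X ≫ g = f := (d.ge_adj n X B hB).2 f

lemma exists_distTriang_π (n : ℤ) (X : C) :
    ∃ (A : C) (_ : t.le (n - 1) A) (F : A ⟶ X) (H : (d.τge n).obj X ⟶ A⟦(1 : ℤ)⟧),
      Triangle.mk F ((d.π n).app X) H ∈ distTriang C := by
  obtain ⟨A, B, hA, hB, F, G, H, hT⟩ := t.exists_triangle X (n - 1) n (by omega)
  obtain ⟨u, hu⟩ : ∃ u : B ⟶ (d.τge n).obj X, (d.π n).app X = G ≫ u :=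
    Triangle.yoneda_exact₂ _ hT ((d.π n).app X)
      (t.zero_of_isLE_of_isGE _ (n - 1) n (by omega) ⟨hA⟩ ⟨d.ge_mem n X⟩)
  obtain ⟨v, hv⟩ := d.exists_ge_desc n hB G
  have hvu : v ≫ u = 𝟙 _ :=
    d.ge_ext n (d.ge_mem n X) (by rw [reassoc_of% hv, comp_id]; exact hu.symm)
  have huv : u ≫ v = 𝟙 B := eq_of_mor₂_comp_eq hT (t.le_monotone (by omega) _ hA) hB
    (by dsimp only [Triangle.mk]; rw [← assoc, ← hu, hv, comp_id])
  have : IsIso v := ⟨u, hvu, huv⟩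
  refine ⟨A, hA, F, v ≫ H, isomorphic_distinguished _ hT _ ?_⟩
  refine Triangle.isoMk _ _ (Iso.refl A) (Iso.refl X) (asIso v : (d.τge n).obj X ≅ B) ?_ ?_ ?_
  · show F ≫ 𝟙 X = 𝟙 A ≫ F
    simp
  · show (d.π n).app X ≫ v = 𝟙 X ≫ G
    rw [id_comp, hv]
  · show (v ≫ H) ≫ (𝟙 A)⟦(1 : ℤ)⟧' = v ≫ H
    simp

lemma exists_distTriang_ι (n : ℤ) (X : C) :
    ∃ (B : C) (_ : t.ge (n + 1) B) (G : X ⟶ B) (H : B ⟶ ((d.τle n).obj X)⟦(1 : ℤ)⟧),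
      Triangle.mk ((d.ι n).app X) G H ∈ distTriang C := by
  obtain ⟨A, B, hA, hB, F, G, H, hT⟩ := t.exists_triangle X n (n + 1) rfl
  obtain ⟨v, hv⟩ : ∃ v : (d.τle n).obj X ⟶ A, (d.ι n).app X = v ≫ F :=
    Triangle.coyoneda_exact₂ _ hT ((d.ι n).app X)
      (t.zero_of_isLE_of_isGE _ n (n + 1) (by omega) ⟨d.le_mem n X⟩ ⟨hB⟩)
  obtain ⟨a, ha⟩ := d.exists_le_lift n hA F
  have hav : a ≫ v = 𝟙 A := eq_of_comp_mor₁_eq hT (t.ge_antitone (by omega) _ hB) hA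
    (by dsimp only [Triangle.mk]; rw [assoc, ← hv, ha, id_comp])
  have hva : v ≫ a = 𝟙 _ := d.le_ext n (d.le_mem n X) (by rw [assoc, ha, ← hv, id_comp])
  have : IsIso a := ⟨v, hav, hva⟩
  refine ⟨B, hB, G, H ≫ a⟦(1 : ℤ)⟧', isomorphic_distinguished _ hT _ ?_⟩
  refine Triangle.isoMk _ _ (asIso a).symm (Iso.refl X) (Iso.refl B) ?_ ?_ ?_
  · show (d.ι n).app X ≫ 𝟙 ((𝟭 C).obj X) = inv a ≫ F
    rw [comp_id, IsIso.eq_inv_comp, ha]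
  · show G ≫ 𝟙 B = 𝟙 X ≫ G
    simp
  · show (H ≫ a⟦(1 : ℤ)⟧') ≫ (inv a)⟦(1 : ℤ)⟧' = 𝟙 B ≫ H
    simp

lemma ge_τle_obj {n : ℤ} {Y : C} (hY : t.ge n Y) : t.ge n ((d.τle n).obj Y) := by
  obtain ⟨A, B, hA, hB, F, G, H, hT⟩ :=
    t.exists_triangle ((d.τle n).obj Y) (n - 1) n (by omega)
  have hF : F = 0 := d.le_ext n (t.le_monotone (by omega) _ hA)
    (by rw [zero_comp]; exact t.zero_of_isLE_of_isGE _ (n - 1) n (by omega) ⟨hA⟩ ⟨hY⟩)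
  -- As `F = 0`, `H` has a section `σ`, which vanishes as a map from `U_{≤n-2}` to `U_{≥n}`.
  obtain ⟨σ, hσ⟩ := Triangle.coyoneda_exact₁ _ hT (𝟙 (A⟦(1 : ℤ)⟧))
    (by show 𝟙 _ ≫ F⟦(1 : ℤ)⟧' = 0; rw [hF, Functor.map_zero, comp_zero])
  have hσ₀ : σ = 0 := t.zero_of_isLE_of_isGE σ (n - 2) n (by omega)
    ⟨t.le_shift (n - 1) 1 (n - 2) (by omega) _ hA⟩ ⟨hB⟩
  have hA₁ : IsZero (A⟦(1 : ℤ)⟧) := by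
    rw [IsZero.iff_id_eq_zero, hσ, hσ₀]
    exact zero_comp
  have : IsIso G := (Triangle.isZero₁_iff_isIso₂ _ hT).1
    ((Triangle.isZero₁_iff _ hT).2 ⟨hF, hA₁.eq_of_tgt _ _⟩)
  exact (t.ge n).prop_of_iso (asIso G).symm hB

lemma mem_heart_H (n : ℤ) (Z : C) : InHeart t ((d.H n).obj Z) :=
  ⟨t.le_shift n n 0 (by omega) _ (d.le_mem n _),
   t.ge_shift n n 0 (by omega) _ (d.ge_τle_obj (d.ge_mem n Z))⟩

lemma isSplitMono_ι (hher : IsHereditary t) (n : ℤ) (Y : C) :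
    IsSplitMono ((d.ι n).app Y) := by
  obtain ⟨B, hB, G, H, hT⟩ := d.exists_distTriang_ι n Y
  have hH : H = 0 :=
    hher.eq_zero (by omega) hB (t.le_shift n 1 (n - 1) (by omega) _ (d.le_mem n Y)) H
  have : Mono ((d.ι n).app Y) := Triangle.mono₁ _ hT hH
  exact isSplitMono_of_mono _

lemma exists_comp_π_eq_ι (hher : IsHereditary t) (n : ℤ) (X : C) :
    ∃ s : (d.τle n).obj ((d.τge n).obj X) ⟶ X,
      s ≫ (d.π n).app X = (d.ι n).app ((d.τge n).obj X) := by
  obtain ⟨A, hA, F, H, hT⟩ := d.exists_distTriang_π n X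
  obtain ⟨s, hs⟩ := Triangle.coyoneda_exact₃ _ hT ((d.ι n).app ((d.τge n).obj X))
    (hher.eq_zero (show (n - 2) + 2 ≤ n by omega) (d.ge_τle_obj (d.ge_mem n X))
      (t.le_shift (n - 1) 1 (n - 2) (by omega) _ hA) _)
  exact ⟨s, hs.symm⟩

lemma map_τle_map_τge_eq_zero (n : ℤ) {T Z : C} (u : T ⟶ Z)
    {r : (d.τge n).obj Z ⟶ (d.τle n).obj ((d.τge n).obj Z)}
    (hr : (d.ι n).app ((d.τge n).obj Z) ≫ r = 𝟙 _) (hu : u ≫ (d.π n).app Z ≫ r = 0) :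
    (d.τle n).map ((d.τge n).map u) = 0 := by
  have hur : (d.τge n).map u ≫ r = 0 :=
    d.ge_ext n (d.ge_τle_obj (d.ge_mem n Z))
      (by simpa [← (d.π n).naturality_assoc u] using hu)
  calc (d.τle n).map ((d.τge n).map u)
      = (d.τle n).map ((d.τge n).map u) ≫ (d.ι n).app ((d.τge n).obj Z) ≫ r := by
        rw [hr, comp_id]
    _ = (d.ι n).app _ ≫ (d.τge n).map u ≫ r := by simp
    _ = 0 := by rw [hur, comp_zero]

lemma exists_retract_shift_H (hher : IsHereditary t) (n : ℤ) (Z : C) :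
    ∃ (s : ((d.H n).obj Z)⟦-n⟧ ⟶ Z) (q : Z ⟶ ((d.H n).obj Z)⟦-n⟧), s ≫ q = 𝟙 _ ∧
      ∀ {T : C} (u : T ⟶ Z), u ≫ q = 0 → (d.τle n).map ((d.τge n).map u) = 0 := by
  obtain ⟨s, hs⟩ := d.exists_comp_π_eq_ι hher n Z
  have := d.isSplitMono_ι hher n ((d.τge n).obj Z)
  let e : ((d.H n).obj Z)⟦-n⟧ ≅ (d.τle n).obj ((d.τge n).obj Z) := shiftShiftNeg _ n
  refine ⟨e.hom ≫ s, (d.π n).app Z ≫ retraction ((d.ι n).app ((d.τge n).obj Z)) ≫ e.inv,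
    by simp [reassoc_of% hs], fun u hu => ?_⟩
  exact d.map_τle_map_τge_eq_zero n u (IsSplitMono.id _)
    (by simpa using congrArg (· ≫ e.hom) hu)

lemma nonempty_τge_iso_of_ge {m m' : ℤ} (hmm' : m ≤ m') (X : C)
    (hX : t.ge m' ((d.τge m).obj X)) : Nonempty ((d.τge m).obj X ≅ (d.τge m').obj X) := by
  obtain ⟨a, ha⟩ := d.exists_ge_desc m (t.ge_antitone hmm' _ (d.ge_mem m' X)) ((d.π m').app X)
  obtain ⟨b, hb⟩ := d.exists_ge_desc m' hX ((d.π m).app X)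
  dsimp only [Functor.id_obj] at ha hb
  exact ⟨⟨a, b, d.ge_ext m (d.ge_mem m X) (by rw [comp_id, reassoc_of% ha, hb]),
    d.ge_ext m' (d.ge_mem m' X) (by rw [comp_id, reassoc_of% hb, ha])⟩⟩

lemma ge_τge_of_forall_isZero {X : C} (hX : ∀ n, IsZero ((d.τle n).obj ((d.τge n).obj X)))
    {n m : ℤ} (hnm : n ≤ m) : t.ge m ((d.τge n).obj X) := by
  induction m, hnm using Int.leInduction with
  | base => exact d.ge_mem n X
  | succ m hnm ih =>
    obtain ⟨e⟩ := d.nonempty_τge_iso_of_ge hnm X ih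
    obtain ⟨B, hB, G, H, hT⟩ := d.exists_distTriang_ι m ((d.τge n).obj X)
    have : IsIso G :=
      (Triangle.isZero₁_iff_isIso₂ _ hT).1 ((hX m).of_iso ((d.τle m).mapIso e))
    exact (t.ge (m + 1)).prop_of_iso (asIso G).symm hB

lemma isZero_of_forall_isZero (hnd : IsNondegenerate t) {X : C}
    (hX : ∀ n, IsZero ((d.τle n).obj ((d.τge n).obj X))) : IsZero X := by
  have hτge : ∀ n, IsZero ((d.τge n).obj X) := fun n => hnd.2 _ fun m => by
    rcases le_or_gt n m with hnm | hmn
    · exact d.ge_τge_of_forall_isZero hX hnm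
    · exact t.ge_antitone hmn.le _ (d.ge_mem n X)
  refine hnd.1 X fun n => ?_
  obtain ⟨A, hA, F, H, hT⟩ := d.exists_distTriang_π (n + 1) X
  have : IsIso F := (Triangle.isZero₃_iff_isIso₁ _ hT).1 (hτge (n + 1))
  simpa using (t.le (n + 1 - 1)).prop_of_iso (asIso F) hA

lemma isZero_of_retract (hnd : IsNondegenerate t) {W Z : C} {w : W ⟶ Z} {g : Z ⟶ W}
    (hwg : w ≫ g = 𝟙 W) (hw : ∀ n, (d.τle n).map ((d.τge n).map w) = 0) : IsZero W :=
  d.isZero_of_forall_isZero hnd fun n => by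
    rw [IsZero.iff_id_eq_zero]
    calc 𝟙 _ = (d.τle n).map ((d.τge n).map (w ≫ g)) := by
          rw [hwg, CategoryTheory.Functor.map_id, CategoryTheory.Functor.map_id]
      _ = 0 := by rw [Functor.map_comp, Functor.map_comp, hw n, zero_comp]

end TruncData

end TStructure

/-- Let `U` be a hereditary, non-degenerate t-structure such that for every
family `(Aₙ)_{n ∈ ℤ}` of objects of the heart, the coproduct `∐ₙ Σ⁻ⁿAₙ` and the product
`∏ₙ Σ⁻ⁿAₙ` exist and the canonical morphism between them is an isomorphism. Then every
object `Z` is isomorphic to `∐ₙ Σ⁻ⁿHⁿ(Z)`. -/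
theorem statement5 (t : TStructure C) (d : TruncData t)
    (hher : IsHereditary t) (hnd : IsNondegenerate t)
    (h : ∀ A : ℤ → C, (∀ n : ℤ, InHeart t (A n)) →
      ∃ (c : Cofan (fun n : ℤ => (A n)⟦(-n : ℤ)⟧)) (_ : IsColimit c)
        (p : Fan (fun n : ℤ => (A n)⟦(-n : ℤ)⟧)) (_ : IsLimit p)
        (φ : c.pt ⟶ p.pt),
        (∀ i j : ℤ, c.inj i ≫ φ ≫ p.proj j =
          (if hij : i = j then eqToHom (by rw [hij]) else 0)) ∧ IsIso φ)
    (Z : C) :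
    ∃ c : Cofan (fun n : ℤ => ((d.H n).obj Z)⟦(-n : ℤ)⟧),
      Nonempty (IsColimit c) ∧ Nonempty (Z ≅ c.pt) := by
  obtain ⟨c, hc, p, hp, φ, hφ, _⟩ := h _ fun n => d.mem_heart_H n Z
  choose s q hsq hq using fun n => d.exists_retract_shift_H hher n Z
  have hS := fun n => (d.mem_heart_H n Z).shift_neg n
  let α := Cofan.IsColimit.desc hc s
  let β := Fan.IsLimit.lift hp q
  have : IsIso (α ≫ β) := isIso_of_comp_proj_eq_of_ne_sub_one
    (fun i j hji => hher.eq_zero hji (hS i).2 (hS j).1) hc hp hφ fun i j hne => by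
      simpa [α, β, hφ] using comp_eq_dite_of_ne_sub_one hher hS hsq hne
  obtain ⟨W, G, δ, hT⟩ := distinguished_cocone_triangle α
  obtain ⟨w, hwG, hwρ⟩ := exists_section_of_retraction hT (ρ := β ≫ inv (α ≫ β))
    (by rw [← assoc, IsIso.hom_inv_id])
  have hwβ : w ≫ β = 0 := by rw [← cancel_mono (inv (α ≫ β)), assoc, hwρ, zero_comp]
  have hW : IsZero W := d.isZero_of_retract hnd hwG fun n => hq n w (by
    simpa [β] using hwβ =≫ p.proj n)
  have : IsIso α := (Triangle.isZero₃_iff_isIso₁ _ hT).1 hW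
  exact ⟨c, ⟨hc⟩, ⟨(asIso α).symm⟩⟩

end TStructurePaper
end

section
/- Let U be a regular t-structure on a triangulated category T. Then gl.dim(U^b) = gl.dim(U), where U^b is the restriction of U to a bounded t-structure on the full triangulated subcategory U_ℕ of T. -/
open CategoryTheory Category Limits Pretriangulated Triangulated

namespace TStructurePaper

variable {C : Type*} [Category C] [Preadditive C] [HasZeroObject C]
  [HasShift C ℤ] [∀ (n : ℤ), (shiftFunctor C n).Additive] [Pretriangulated C]

/-- `Hom(U^b_{≥0}, U^b_{≤-(d+1)}) = 0` computed in the full subcategory `U_ℕ`. -/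
def HasGlDimAtMostB (t : TStructure C) (d : ℕ) : Prop :=
  ∀ ⦃X Y : C⦄, InUN t X → InUN t Y → t.ge 0 X → t.le (-(d + 1)) Y → ∀ f : X ⟶ Y, f = 0

/-- The global dimension of the restricted bounded t-structure `U^b` on `U_ℕ`
(the Hom-groups in the full subcategory `U_ℕ` being those of `T`). -/
noncomputable def glDimB (t : TStructure C) : ℕ∞ :=
  sInf {e : ℕ∞ | ∃ d : ℕ, e = d ∧ HasGlDimAtMostB t d}


/-
Given `f : X ⟶ Y` with `X ∈ U_{≥0}` and `Y ∈ U_{≤-(d+1)}`, regularity reduces `f = 0` to `f`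
factoring through `U_{≥n}` for every `n`. The truncation triangle `A → X → B` with `B ∈ U_{≥n}`
provides such a factorisation once `f` kills `A ∈ U_{[0, n-1]}`. Dually, regularity on the side
of `Y` reduces this to the vanishing of morphisms from `A` into objects of `U_{[k+1, -(d+1)]}`:
morphisms inside `U_ℕ`, which vanish when `gl.dim(U^b) ≤ d`.
-/

section

variable (t : TStructure C)

lemma inUN_of_ge_of_le {a b : ℤ} {X : C} (ha : t.ge a X) (hb : t.le b X) : InUN t X :=
  ⟨(max (-a) b).toNat, t.ge_antitone (by omega) X ha, t.le_monotone (by omega) X hb⟩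

lemma factorsThrough_ge_of_forall_comp_eq_zero {a n : ℤ} {X Y : C} (hX : t.ge a X)
    (f : X ⟶ Y) (hf : ∀ ⦃A : C⦄, t.le (n - 1) A → t.ge a A → ∀ u : A ⟶ X, u ≫ f = 0) :
    FactorsThrough (t.ge n) f := by
  rcases le_or_gt n a with hn | hn
  · exact ⟨X, t.ge_antitone hn X hX, 𝟙 X, f, (id_comp f).symm⟩
  obtain ⟨A, B, hA, hB, u, v, w, hT⟩ := t.exists_triangle X (n - 1) n (by omega)
  have hA' : t.ge a A :=
    (t.isGE₂ _ (inv_rot_of_distTriang _ hT) a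
      ⟨t.ge_antitone (by omega) _ (t.ge_shift n (-1) (n + 1) (by omega) B hB)⟩ ⟨hX⟩).ge
  obtain ⟨r, hr⟩ := Triangle.yoneda_exact₂ _ hT f (hf hA hA' u)
  exact ⟨B, hB, v, r, hr⟩

lemma factorsThrough_le_of_forall_comp_eq_zero {b n : ℤ} {X Y : C} (hY : t.le b Y)
    (f : X ⟶ Y) (hf : ∀ ⦃B : C⦄, t.ge (n + 1) B → t.le b B → ∀ v : Y ⟶ B, f ≫ v = 0) :
    FactorsThrough (t.le n) f := by
  rcases le_or_gt b n with hn | hn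
  · exact ⟨Y, t.le_monotone hn Y hY, f, 𝟙 Y, (comp_id f).symm⟩
  obtain ⟨A, B, hA, hB, u, v, w, hT⟩ := t.exists_triangle Y n (n + 1) rfl
  have hB' : t.le b B :=
    (t.isLE₂ _ (rot_of_distTriang _ hT) b ⟨hY⟩
      ⟨t.le_monotone (by omega) _ (t.le_shift n 1 (n - 1) (by omega) A hA)⟩).le
  obtain ⟨s, hs⟩ := Triangle.coyoneda_exact₂ _ hT f (hf hB hB' v)
  exact ⟨A, hA, s, u, hs⟩

lemma IsRegular.hasGlDimAtMost {t : TStructure C} (h : IsRegular t) {d : ℕ}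
    (hd : HasGlDimAtMostB t d) : HasGlDimAtMost t d := by
  intro X Y hX hY f
  refine h.1 ⟨_, hY⟩ f fun n => factorsThrough_ge_of_forall_comp_eq_zero t hX f ?_
  intro A hA hA₀ u
  refine h.2 ⟨0, hA₀⟩ (u ≫ f) fun k => factorsThrough_le_of_forall_comp_eq_zero t hY _ ?_
  intro B hB hB₁ v
  exact hd (inUN_of_ge_of_le t hA₀ hA) (inUN_of_ge_of_le t hB hB₁) hA₀ hB₁ _

lemma IsRegular.hasGlDimAtMostB_iff {t : TStructure C} (h : IsRegular t) (d : ℕ) :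
    HasGlDimAtMostB t d ↔ HasGlDimAtMost t d :=
  ⟨h.hasGlDimAtMost, fun hd _ _ _ _ hX hY f => hd hX hY f⟩

end

/-- For a regular t-structure `U`, `gl.dim(U^b) = gl.dim(U)`. -/
theorem statement7 (t : TStructure C) (h : IsRegular t) : glDimB t = glDim t := by
  simp only [glDimB, glDim, h.hasGlDimAtMostB_iff]

end TStructurePaper
end

section
/- Let U and V be two t-structures on a triangulated category T and let m ≤ n be integers. Then the following are equivalent: (1) V_{≤m} ⊆ U_{≤0} ⊆ V_{≤n}; (2) U_{≤-n} ⊆ V_{≤0} ⊆ U_{≤-m}; (3) V_{≥n} ⊆ U_{≥0} ⊆ V_{≥m}; (4) U_{≥-m} ⊆ V_{≥0} ⊆ U_{≥-n}; (5) V_{≤m} ⊆ U_{≤0} and V_{≥n} ⊆ U_{≥0}; (6) U_{≤-n} ⊆ V_{≤0} and U_{≥-m} ⊆ V_{≥0}. Moreover, if both U and V are bounded, then each of (1)–(6) is equivalent to: (i) U₀ ⊆ V_{≥m} ∩ V_{≤n}, and also to (i)' V₀ ⊆ U_{≥-n} ∩ U_{≤-m}. -/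
/-!
An inclusion `V_{≤a} ⊆ U_{≤b}` is unchanged by shifting both indices by the same amount, and, as
`U_{≥b+1}` is the right orthogonal of `U_{≤b}`, it is equivalent to `U_{≥b+1} ⊆ V_{≥a+1}`; these
two moves connect the six conditions. If `U` is bounded, truncation triangles exhibit every object
of `U_{≤0}` (resp. `U_{≥0}`) as an iterated extension of objects of the heart shifted to the left
(resp. right), and `V_{≤n}` (resp. `V_{≥m}`) is closed under extensions and such shifts, so an
inclusion of the heart spreads to the whole of `U_{≤0}` (resp. `U_{≥0}`).
-/

open CategoryTheory Category Limits Pretriangulated Triangulated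

namespace TStructurePaper

variable {C : Type*} [Category C] [Preadditive C] [HasZeroObject C]
  [HasShift C ℤ] [∀ (n : ℤ), (shiftFunctor C n).Additive] [Pretriangulated C]

section

variable (t t' : TStructure C)

lemma le_le_iff_of_sub_eq {a b a' b' : ℤ} (h : a' - a = b' - b) :
    t.le a ≤ t'.le b ↔ t.le a' ≤ t'.le b' := by
  have shift : ∀ {a b a' b' : ℤ}, a' - a = b' - b → t.le a ≤ t'.le b → t.le a' ≤ t'.le b' := by
    intro a b a' b' h hle
    rw [← t.shift_le (a' - a) a a' (by lia), ← t'.shift_le (a' - a) b b' (by lia)]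
    exact fun X hX => hle _ hX
  exact ⟨shift h, shift (by lia)⟩

lemma ge_ge_iff_of_sub_eq {a b a' b' : ℤ} (h : a' - a = b' - b) :
    t.ge a ≤ t'.ge b ↔ t.ge a' ≤ t'.ge b' := by
  have shift : ∀ {a b a' b' : ℤ}, a' - a = b' - b → t.ge a ≤ t'.ge b → t.ge a' ≤ t'.ge b' := by
    intro a b a' b' h hge
    rw [← t.shift_ge (a' - a) a a' (by lia), ← t'.shift_ge (a' - a) b b' (by lia)]
    exact fun X hX => hge _ hX
  exact ⟨shift h, shift (by lia)⟩

lemma le_le_iff_ge_ge {a b a' b' : ℤ} (h : a' - a = b' - b) :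
    t.le a ≤ t'.le b ↔ t'.ge b' ≤ t.ge a' := by
  rw [← ge_ge_iff_of_sub_eq t' t (a := b + 1) (b := a + 1) (by lia)]
  constructor
  · intro hle Y hY
    rw [t.ge_iff_isGE, t.isGE_iff_orthogonal a (a + 1) rfl]
    intro X f hX
    have := (t'.le_iff_isLE X b).1 (hle X hX.le)
    have := (t'.ge_iff_isGE Y (b + 1)).1 hY
    exact t'.zero f b (b + 1)
  · intro hge X hX
    rw [t'.le_iff_isLE, t'.isLE_iff_orthogonal b (b + 1) rfl]
    intro Y f hY
    have := (t.ge_iff_isGE Y (a + 1)).1 (hge Y hY.ge)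
    have := (t.le_iff_isLE X a).1 hX
    exact t.zero f a (a + 1)

lemma isLE₃ {T : Triangle C} (hT : T ∈ distTriang C) (n : ℤ) [t.IsLE T.obj₁ (n + 1)]
    [t.IsLE T.obj₂ n] : t.IsLE T.obj₃ n := by
  rw [t.isLE_iff_orthogonal n (n + 1) rfl]
  intro Y f hY
  obtain ⟨g, rfl⟩ := Triangle.yoneda_exact₃ _ hT f (t.zero _ n (n + 1))
  have := t.isLE_shift T.obj₁ (n + 1) 1 n
  rw [t.zero g n (n + 1), comp_zero]

lemma isGE₁ {T : Triangle C} (hT : T ∈ distTriang C) (n : ℤ) [t.IsGE T.obj₂ n]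
    [t.IsGE T.obj₃ (n - 1)] : t.IsGE T.obj₁ n := by
  rw [t.isGE_iff_orthogonal (n - 1) n (by lia)]
  intro Y f hY
  obtain ⟨g, rfl⟩ :=
    Triangle.coyoneda_exact₂ _ (inv_rot_of_distTriang _ hT) f (t.zero (Y := T.obj₂) _ (n - 1) n)
  have : t.IsGE T.invRotate.obj₁ n := t.isGE_shift T.obj₃ (n - 1) (-1) n
  rw [t.zero g (n - 1) n]
  exact zero_comp

variable {t t'}

lemma le_le_of_heart_le (hbdd : ∀ X, ∃ k, t.ge k X) {n : ℤ}
    (h : ∀ X, InHeart t X → t'.le n X) : t.le 0 ≤ t'.le n := by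
  suffices key : ∀ (k : ℕ) (X : C), t.IsLE X 0 → t.IsGE X (-k) → t'.IsLE X n by
    intro X hX
    obtain ⟨k, hk⟩ := hbdd X
    have := (t.ge_iff_isGE X k).1 hk
    exact (key (-k).toNat X ⟨hX⟩ (t.isGE_of_ge X _ k)).le
  intro k
  induction k with
  | zero =>
    intro X hX₀ hX₁
    exact ⟨h X ⟨hX₀.le, by simpa using hX₁.ge⟩⟩
  | succ k ih =>
    intro X hX₀ hX₁
    let T := (t.triangleLTGE 0).obj X
    have hT := t.triangleLTGE_distinguished 0 X
    have : t.IsLE T.obj₂ 0 := hX₀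
    have : t.IsGE T.obj₂ (-(k + 1 : ℕ)) := hX₁
    have : t.IsLE T.obj₁ (0 + 1) := t.isLE_of_le _ (0 - 1) _
    have : t.IsLE T.obj₃ 0 := isLE₃ t hT 0
    have : t.IsGE T.obj₃ (-(k + 1 : ℕ) - 1) := t.isGE_of_ge _ _ 0
    have : t.IsGE T.obj₁ (-(k + 1 : ℕ)) := isGE₁ t hT _
    have : t.IsLE (T.obj₁⟦(-1 : ℤ)⟧) 0 := t.isLE_shift _ (0 - 1) (-1) 0
    have : t.IsGE (T.obj₁⟦(-1 : ℤ)⟧) (-k) := t.isGE_shift _ (-(k + 1 : ℕ)) (-1) (-k)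
    have := ih _ ‹_› ‹_›
    have : t'.IsLE T.obj₁ (n - 1) := t'.isLE_of_shift _ (n - 1) (-1) n
    have : t'.IsLE T.obj₁ n := t'.isLE_of_le _ (n - 1) n
    have : t'.IsLE T.obj₃ n := ⟨h _ ⟨t.le_of_isLE _ 0, t.ge_of_isGE _ 0⟩⟩
    exact t'.isLE₂ T hT n ‹_› ‹_›

lemma ge_ge_of_heart_ge (hbdd : ∀ X, ∃ k, t.le k X) {m : ℤ}
    (h : ∀ X, InHeart t X → t'.ge m X) : t.ge 0 ≤ t'.ge m := by
  suffices key : ∀ (k : ℕ) (X : C), t.IsGE X 0 → t.IsLE X k → t'.IsGE X m by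
    intro X hX
    obtain ⟨k, hk⟩ := hbdd X
    have := (t.le_iff_isLE X k).1 hk
    exact (key k.toNat X ⟨hX⟩ (t.isLE_of_le X k _)).ge
  intro k
  induction k with
  | zero =>
    intro X hX₀ hX₁
    exact ⟨h X ⟨by simpa using hX₁.le, hX₀.ge⟩⟩
  | succ k ih =>
    intro X hX₀ hX₁
    let T := (t.triangleLTGE 1).obj X
    have hT := t.triangleLTGE_distinguished 1 X
    have : t.IsGE T.obj₂ 0 := hX₀
    have : t.IsLE T.obj₂ (k + 1 : ℕ) := hX₁
    have : t.IsGE T.obj₃ (0 - 1) := t.isGE_of_ge _ _ 1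
    have : t.IsGE T.obj₁ 0 := isGE₁ t hT 0
    have : t.IsLE T.obj₁ 0 := t.isLE_of_le _ (1 - 1) 0
    have : t.IsLE T.obj₁ ((k + 1 : ℕ) + 1) := t.isLE_of_le _ 0 _
    have : t.IsLE T.obj₃ (k + 1 : ℕ) := isLE₃ t hT _
    have : t.IsGE (T.obj₃⟦(1 : ℤ)⟧) 0 := t.isGE_shift _ 1 1 0
    have : t.IsLE (T.obj₃⟦(1 : ℤ)⟧) k := t.isLE_shift _ (k + 1 : ℕ) 1 k
    have := ih _ ‹_› ‹_›
    have : t'.IsGE T.obj₃ (m + 1) := t'.isGE_of_shift _ (m + 1) 1 m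
    have : t'.IsGE T.obj₃ m := t'.isGE_of_ge _ m (m + 1)
    have : t'.IsGE T.obj₁ m := ⟨h _ ⟨t.le_of_isLE _ 0, t.ge_of_isGE _ 0⟩⟩
    exact t'.isGE₂ T hT m ‹_› ‹_›

lemma le_sandwich_iff_heart_subset (hbdd : IsBounded t) (m n : ℤ) :
    (t'.le m ≤ t.le 0 ∧ t.le 0 ≤ t'.le n) ↔ ∀ X, InHeart t X → t'.ge m X ∧ t'.le n X := by
  rw [le_le_iff_ge_ge t' t (a' := m) (b' := 0) (by lia)]
  constructor
  · rintro ⟨hge, hle⟩ X ⟨hX₀, hX₁⟩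
    exact ⟨hge X hX₁, hle X hX₀⟩
  · intro h
    exact ⟨ge_ge_of_heart_ge hbdd.1 fun X hX => (h X hX).1,
      le_le_of_heart_le hbdd.2 fun X hX => (h X hX).2⟩

end

theorem statement10_general (u v : TStructure C) (m n : ℤ) :
    ([(∀ X : C, v.le m X → u.le 0 X) ∧ (∀ X : C, u.le 0 X → v.le n X),
      (∀ X : C, u.le (-n) X → v.le 0 X) ∧ (∀ X : C, v.le 0 X → u.le (-m) X),
      (∀ X : C, v.ge n X → u.ge 0 X) ∧ (∀ X : C, u.ge 0 X → v.ge m X),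
      (∀ X : C, u.ge (-m) X → v.ge 0 X) ∧ (∀ X : C, v.ge 0 X → u.ge (-n) X),
      (∀ X : C, v.le m X → u.le 0 X) ∧ (∀ X : C, v.ge n X → u.ge 0 X),
      (∀ X : C, u.le (-n) X → v.le 0 X) ∧ (∀ X : C, u.ge (-m) X → v.ge 0 X)].TFAE) ∧
    (IsBounded u → IsBounded v →
      ((((∀ X : C, v.le m X → u.le 0 X) ∧ (∀ X : C, u.le 0 X → v.le n X)) ↔
          (∀ X : C, InHeart u X → v.ge m X ∧ v.le n X)) ∧
       (((∀ X : C, v.le m X → u.le 0 X) ∧ (∀ X : C, u.le 0 X → v.le n X)) ↔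
          (∀ X : C, InHeart v X → u.ge (-n) X ∧ u.le (-m) X)))) := by
  have hm₂ : v.le m ≤ u.le 0 ↔ v.le 0 ≤ u.le (-m) := le_le_iff_of_sub_eq v u (by lia)
  have hm₃ : v.le m ≤ u.le 0 ↔ u.ge 0 ≤ v.ge m := le_le_iff_ge_ge v u (by lia)
  have hm₄ : v.le m ≤ u.le 0 ↔ u.ge (-m) ≤ v.ge 0 := le_le_iff_ge_ge v u (by lia)
  have hn₂ : u.le 0 ≤ v.le n ↔ u.le (-n) ≤ v.le 0 := le_le_iff_of_sub_eq u v (by lia)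
  have hn₃ : u.le 0 ≤ v.le n ↔ v.ge n ≤ u.ge 0 := le_le_iff_ge_ge u v (by lia)
  have hn₄ : u.le 0 ≤ v.le n ↔ v.ge 0 ≤ u.ge (-n) := le_le_iff_ge_ge u v (by lia)
  have h₁₂ : (v.le m ≤ u.le 0 ∧ u.le 0 ≤ v.le n) ↔ (u.le (-n) ≤ v.le 0 ∧ v.le 0 ≤ u.le (-m)) :=
    (and_congr hm₂ hn₂).trans and_comm
  refine ⟨?_, fun hu hv => ⟨le_sandwich_iff_heart_subset hu m n,
    h₁₂.trans (le_sandwich_iff_heart_subset hv (-n) (-m))⟩⟩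
  tfae_have 1 ↔ 2 := h₁₂
  tfae_have 1 ↔ 3 := (and_congr hm₃ hn₃).trans and_comm
  tfae_have 1 ↔ 4 := and_congr hm₄ hn₄
  tfae_have 1 ↔ 5 := and_congr Iff.rfl hn₃
  tfae_have 1 ↔ 6 := (and_congr hm₄ hn₂).trans and_comm
  tfae_finish

/-- (Lemma on comparing two t-structures.) For t-structures `U`, `V` and
integers `m ≤ n`, conditions (1)–(6) are equivalent; if moreover both `U` and `V` are
bounded, they are also equivalent to (i) `U₀ ⊆ V_{[m,n]}` and to (i)' `V₀ ⊆ U_{[-n,-m]}`. -/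
theorem statement10 (u v : TStructure C) (m n : ℤ) (hmn : m ≤ n) :
    ([(∀ X : C, v.le m X → u.le 0 X) ∧ (∀ X : C, u.le 0 X → v.le n X),
      (∀ X : C, u.le (-n) X → v.le 0 X) ∧ (∀ X : C, v.le 0 X → u.le (-m) X),
      (∀ X : C, v.ge n X → u.ge 0 X) ∧ (∀ X : C, u.ge 0 X → v.ge m X),
      (∀ X : C, u.ge (-m) X → v.ge 0 X) ∧ (∀ X : C, v.ge 0 X → u.ge (-n) X),
      (∀ X : C, v.le m X → u.le 0 X) ∧ (∀ X : C, v.ge n X → u.ge 0 X),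
      (∀ X : C, u.le (-n) X → v.le 0 X) ∧ (∀ X : C, u.ge (-m) X → v.ge 0 X)].TFAE) ∧
    (IsBounded u → IsBounded v →
      ((((∀ X : C, v.le m X → u.le 0 X) ∧ (∀ X : C, u.le 0 X → v.le n X)) ↔
          (∀ X : C, InHeart u X → v.ge m X ∧ v.le n X)) ∧
       (((∀ X : C, v.le m X → u.le 0 X) ∧ (∀ X : C, u.le 0 X → v.le n X)) ↔
          (∀ X : C, InHeart v X → u.ge (-n) X ∧ u.le (-m) X)))) :=
  statement10_general u v m n

end TStructurePaper
end

section
/- Let U, V, W be t-structures on a triangulated category T. Then: (1) d(U, V) = d(V, U); (2) d(U, V) = 0 if and only if V = Σᵐ(U) for some integer m, i.e. V_{≤0} = U_{≤m} and V_{≥0} = U_{≥m}; (3) d(U, W) ≤ d(U, V) + d(V, W). -/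
open CategoryTheory Category Limits Pretriangulated Triangulated

namespace TStructurePaper

variable {C : Type*} [Category C] [Preadditive C] [HasZeroObject C]
  [HasShift C ℤ] [∀ (n : ℤ), (shiftFunctor C n).Additive] [Pretriangulated C]

/-!
Inclusions between aisles survive shifting both indices by the same amount, which makes
`DistAtMost` symmetric and additive under composition. A t-structure is determined up to
shift by its aisle, since `U_{≥n}` is the right orthogonal of `U_{≤n-1}`.
-/

lemma le_le_le_of_sub_eq {u v : TStructure C} {a b a' b' : ℤ} (h : u.le a ≤ v.le b)
    (hab : a' - a = b' - b) : u.le a' ≤ v.le b' := by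
  rw [← u.shift_le (a' - a) a a' (by omega), ← v.shift_le (a' - a) b b' (by omega)]
  exact fun X => h _

lemma ge_le_ge_of_sub_eq {u v : TStructure C} {a b a' b' : ℤ} (h : v.le a ≤ u.le b)
    (hab : a' - a = b' - b) : u.ge b' ≤ v.ge a' := by
  intro X hX
  rw [v.ge_iff_isGE, v.isGE_iff_orthogonal (a' - 1) a' (by omega)]
  intro Y f hY
  have hY' := le_le_le_of_sub_eq h (a' := a' - 1) (b' := b' - 1) (by omega) Y hY.le
  exact (u.isGE_iff_orthogonal (b' - 1) b' (by omega) X).1 ⟨hX⟩ Y f ⟨hY'⟩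

lemma DistAtMost.mono {u v : TStructure C} {d d' : ℕ} (h : DistAtMost u v d) (hd : d ≤ d') :
    DistAtMost u v d' := by
  obtain ⟨m, hv, hu⟩ := h
  exact ⟨m, hv, fun X hX => v.le_monotone (by omega) X (hu X hX)⟩

lemma DistAtMost.symm {u v : TStructure C} {d : ℕ} (h : DistAtMost u v d) :
    DistAtMost v u d := by
  obtain ⟨m, hv, hu⟩ := h
  exact ⟨-(m + d), le_le_le_of_sub_eq hu (by omega), le_le_le_of_sub_eq hv (by omega)⟩

lemma DistAtMost.trans {u v w : TStructure C} {d₁ d₂ : ℕ} (h₁ : DistAtMost u v d₁)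
    (h₂ : DistAtMost v w d₂) : DistAtMost u w (d₁ + d₂) := by
  obtain ⟨m₁, hv, hu⟩ := h₁
  obtain ⟨m₂, hw, hv'⟩ := h₂
  exact ⟨m₁ + m₂, fun X hX => hv X (le_le_le_of_sub_eq hw (by omega) X hX),
    fun X hX => le_le_le_of_sub_eq hv' (by omega) X (hu X hX)⟩

lemma distAtMost_comm {u v : TStructure C} {d : ℕ} : DistAtMost u v d ↔ DistAtMost v u d :=
  ⟨DistAtMost.symm, DistAtMost.symm⟩

lemma distAtMost_zero_iff {u v : TStructure C} :
    DistAtMost u v 0 ↔ ∃ m : ℤ, ∀ X : C, v.le 0 X ↔ u.le m X := by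
  constructor
  · rintro ⟨m, hv, hu⟩
    exact ⟨-m, fun X => ⟨le_le_le_of_sub_eq hv (by omega) X,
      le_le_le_of_sub_eq hu (by omega) X⟩⟩
  · rintro ⟨m, h⟩
    exact ⟨-m, le_le_le_of_sub_eq (fun X => (h X).1) (by omega),
      le_le_le_of_sub_eq (fun X => (h X).2) (by omega)⟩

lemma ge_iff_ge_of_le_iff_le {u v : TStructure C} {a b : ℤ} (h : ∀ X : C, v.le a X ↔ u.le b X) :
    ∀ X : C, v.ge a X ↔ u.ge b X := fun X =>
  ⟨ge_le_ge_of_sub_eq (fun Y => (h Y).2) (by omega) X,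
    ge_le_ge_of_sub_eq (fun Y => (h Y).1) (by omega) X⟩

lemma dist_le_natCast_iff {u v : TStructure C} {d : ℕ} : dist u v ≤ d ↔ DistAtMost u v d := by
  refine ⟨fun h => ?_, fun h => sInf_le ⟨d, rfl, h⟩⟩
  rw [← ENat.lt_add_one_iff (ENat.natCast_ne_top d), dist, sInf_lt_iff] at h
  obtain ⟨_, ⟨d', rfl, hd'⟩, hlt⟩ := h
  exact hd'.mono (Nat.lt_add_one_iff.1 (by exact_mod_cast hlt))

lemma dist_comm (u v : TStructure C) : dist u v = dist v u := by
  simp only [dist, distAtMost_comm]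

lemma dist_eq_zero_iff {u v : TStructure C} :
    dist u v = 0 ↔ ∃ m : ℤ, ∀ X : C, v.le 0 X ↔ u.le m X := by
  rw [← nonpos_iff_eq_zero, ← Nat.cast_zero, dist_le_natCast_iff, distAtMost_zero_iff]

lemma dist_triangle (u v w : TStructure C) : dist u w ≤ dist u v + dist v w := by
  rcases eq_top_or_lt_top (dist u v) with h₁ | h₁
  · simp [h₁]
  rcases eq_top_or_lt_top (dist v w) with h₂ | h₂
  · simp [h₂]
  lift dist u v to ℕ using h₁.ne with d₁ hd₁
  lift dist v w to ℕ using h₂.ne with d₂ hd₂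
  rw [← Nat.cast_add, dist_le_natCast_iff]
  exact (dist_le_natCast_iff.1 hd₁.ge).trans (dist_le_natCast_iff.1 hd₂.ge)

/-- For t-structures `U`, `V`, `W`: (1) `d(U,V) = d(V,U)`;
(2) `d(U,V) = 0` iff `V = Σᵐ(U)` for some integer `m`; (3) the triangle inequality. -/
theorem statement11 (u v w : TStructure C) :
    dist u v = dist v u ∧
    (dist u v = 0 ↔
      ∃ m : ℤ, (∀ X : C, v.le 0 X ↔ u.le m X) ∧ (∀ X : C, v.ge 0 X ↔ u.ge m X)) ∧
    dist u w ≤ dist u v + dist v w := by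
  refine ⟨dist_comm u v, ?_, dist_triangle u v w⟩
  rw [dist_eq_zero_iff]
  exact exists_congr fun m => (and_iff_left_of_imp ge_iff_ge_of_le_iff_le).symm

end TStructurePaper
end

section
/- Let U and V be t-structures on a triangulated category T. Then gl.dim(U) ≤ gl.dim(V) + d(U, V) and gl.dim(V) ≤ gl.dim(U) + d(U, V) (as elements of ℕ ∪ {+∞}). -/
open CategoryTheory Category Limits Pretriangulated Triangulated

namespace TStructurePaper

variable {C : Type*} [Category C] [Preadditive C] [HasZeroObject C]
  [HasShift C ℤ] [∀ (n : ℤ), (shiftFunctor C n).Additive] [Pretriangulated C]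

/-! The proof transports a vanishing `Hom(V_{≥0}, V_{≤-(e+1)}) = 0` along the inclusions
`V_{≤m} ⊆ U_{≤0} ⊆ V_{≤m+d}`. For `X ∈ U_{≥0}`, the truncation triangle
`A → X → B → ΣA` of `X` for `V` at level `m` has `A ∈ V_{≤m-1} ⊆ U_{≤-1}`, so `A → X` vanishes
and `X` is a retract of `B ∈ V_{≥m}`; a map from `X` to `Y ∈ U_{≤-(e+d+1)} ⊆ V_{≤m-e-1}` thus
factors through `Hom(B, Y) = 0`. Since `d(U, V) ≤ d` is symmetric in `U` and `V`, the second
inequality is the first one with `U` and `V` exchanged. -/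

lemma le_le_of_sub_eq {a b : TStructure C} {p q p' q' : ℤ} (h : a.le p ≤ b.le q)
    (hpq : p' - p = q' - q) : a.le p' ≤ b.le q' := by
  intro X hX
  rw [← b.shift_le (p' - p) q q' (by omega)]
  exact h _ (a.le_shift p' (p' - p) p (by omega) X hX)

lemma HasGlDimAtMost.hom_eq_zero {t : TStructure C} {e : ℕ} (h : HasGlDimAtMost t e)
    {X Y : C} {n : ℤ} (hX : t.ge n X) (hY : t.le (n - (e + 1)) Y) (f : X ⟶ Y) : f = 0 := by
  apply (shiftFunctor C n).map_injective
  rw [Functor.map_zero]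
  exact h (t.ge_shift n n 0 (by omega) X hX) (t.le_shift _ n _ (by omega) Y hY) _

lemma HasGlDimAtMost.of_distAtMost {u v : TStructure C} {e d : ℕ}
    (hv : HasGlDimAtMost v e) (hd : DistAtMost u v d) : HasGlDimAtMost u (e + d) := by
  obtain ⟨m, hvu, huv⟩ := hd
  intro X Y hX hY f
  have hY' : v.le (m - (e + 1)) Y := le_le_of_sub_eq huv (by push_cast; omega) Y hY
  obtain ⟨A, B, hA, hB, a, b, c, hT⟩ := v.exists_triangle X (m - 1) m (by omega)
  have ha : a = 0 := u.zero_of_isLE_of_isGE a (-1) 0 (by omega)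
    ⟨le_le_of_sub_eq hvu (by omega) A hA⟩ ⟨hX⟩
  obtain ⟨r, hr⟩ : ∃ r : B ⟶ X, 𝟙 X = b ≫ r :=
    Triangle.yoneda_exact₂ _ hT (𝟙 X) (by simp only [Triangle.mk_mor₁, ha]; exact zero_comp)
  calc f = b ≫ r ≫ f := by rw [← assoc, ← hr, id_comp]
    _ = 0 := by rw [hv.hom_eq_zero hB hY' (r ≫ f), comp_zero]

lemma _root_.ENat.sInf_natCast_le_add {P Q R : ℕ → Prop} (h : ∀ a b, P a → Q b → R (a + b)) :
    sInf {e : ℕ∞ | ∃ d : ℕ, e = d ∧ R d} ≤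
      sInf {e : ℕ∞ | ∃ d : ℕ, e = d ∧ P d} + sInf {e : ℕ∞ | ∃ d : ℕ, e = d ∧ Q d} := by
  rw [ENat.sInf_add]
  refine le_iInf₂ fun _ ⟨a, ha, hPa⟩ => ?_
  rw [ENat.add_sInf]
  refine le_iInf₂ fun _ ⟨b, hb, hQb⟩ => ?_
  exact sInf_le ⟨a + b, by rw [ha, hb, Nat.cast_add], h a b hPa hQb⟩

lemma glDim_le_glDim_add_dist (u v : TStructure C) : glDim u ≤ glDim v + dist u v :=
  ENat.sInf_natCast_le_add fun _ _ he hd => HasGlDimAtMost.of_distAtMost he hd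

/-- `gl.dim(U) ≤ gl.dim(V) + d(U,V)` and `gl.dim(V) ≤ gl.dim(U) + d(U,V)`,
as elements of `ℕ ∪ {+∞}`. -/
theorem statement12 (u v : TStructure C) :
    glDim u ≤ glDim v + dist u v ∧ glDim v ≤ glDim u + dist u v :=
  ⟨glDim_le_glDim_add_dist u v, dist_comm u v ▸ glDim_le_glDim_add_dist v u⟩

end TStructurePaper
end

section
/- Let U and V be two t-structures on a triangulated category T with d(U, V) < +∞. Then U is regular if and only if V is regular. -/
/-!
A finite distance `d(U, V) ≤ d` interleaves the aisles up to a fixed shift: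
`V_{≤n} ⊆ U_{≤n-m}` and `U_{≤n} ⊆ V_{≤n+m+d}`. Since `U_{≥n}` is the right orthogonal of
`U_{≤n-1}`, the coaisles are interleaved too. Both halves of regularity only involve
"lying in some `U_{≤m}` (resp. `U_{≥m}`)" and "factoring through `U_{≥n}` (resp. `U_{≤n}`)
for every `n`", and these conditions are unchanged by such a bounded reindexing.
-/

open CategoryTheory Category Limits Pretriangulated Triangulated

namespace TStructurePaper

variable {C : Type*} [Category C] [Preadditive C] [HasZeroObject C]
  [HasShift C ℤ] [∀ (n : ℤ), (shiftFunctor C n).Additive] [Pretriangulated C]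

lemma le_add_le_le_add {u v : TStructure C} {p q : ℤ} (h : v.le p ≤ u.le q) (k : ℤ) :
    v.le (p + k) ≤ u.le (q + k) := by
  rw [← v.shift_le k p (p + k) (add_comm k p), ← u.shift_le k q (q + k) (add_comm k q)]
  exact fun X hX => h _ hX

lemma ge_le_ge_sub {u v : TStructure C} {a : ℤ} (h : ∀ n, u.le n ≤ v.le (n + a)) (n : ℤ) :
    v.ge n ≤ u.ge (n - a) := by
  intro Y hY
  rw [u.ge_iff_isGE, u.isGE_iff_orthogonal (n - a - 1) (n - a) (by lia)]
  intro A f hA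
  have hA' : v.IsLE A (n - 1) := by
    rw [← v.le_iff_isLE, show n - 1 = n - a - 1 + a by lia]
    exact h _ _ ((u.le_iff_isLE _ _).2 hA)
  have : v.IsGE Y n := (v.ge_iff_isGE _ _).1 hY
  exact v.zero f (n - 1) n

lemma IsRegular.of_le_le {u v : TStructure C} {a b : ℤ} (hvu : ∀ n, v.le n ≤ u.le (n + a))
    (huv : ∀ n, u.le n ≤ v.le (n + b)) (hu : IsRegular u) : IsRegular v := by
  have hge := ge_le_ge_sub huv
  constructor
  · rintro X Y ⟨m, hY⟩ f hf
    refine hu.1 ⟨m + a, hvu m Y hY⟩ f fun n => ?_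
    obtain ⟨Z, hZ, g, g', rfl⟩ := hf (n + b)
    exact ⟨Z, by simpa using hge _ Z hZ, g, g', rfl⟩
  · rintro X Y ⟨m, hX⟩ f hf
    refine hu.2 ⟨m - b, hge m X hX⟩ f fun n => ?_
    obtain ⟨Z, hZ, g, g', rfl⟩ := hf (n - a)
    exact ⟨Z, by simpa using hvu _ Z hZ, g, g', rfl⟩

/-- If `d(U,V) < +∞`, then `U` is regular iff `V` is regular. -/
theorem statement15 (u v : TStructure C) (h : dist u v < ⊤) :
    IsRegular u ↔ IsRegular v := by
  obtain ⟨-, ⟨d, rfl, m, hvu, huv⟩, -⟩ := sInf_lt_iff.1 h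
  have hvu' (n : ℤ) : v.le n ≤ u.le (n + -m) := by
    simpa [add_comm, ← sub_eq_add_neg] using
      le_add_le_le_add (p := m) (q := 0) hvu (n - m)
  have huv' (n : ℤ) : u.le n ≤ v.le (n + (m + d)) := by
    simpa [add_comm] using le_add_le_le_add (p := 0) (q := m + d) huv n
  exact ⟨.of_le_le hvu' huv', .of_le_le huv' hvu'⟩

end TStructurePaper
end

section
/- Let U and V be two t-structures on a triangulated category T with d(U, V) < +∞. Then d(U, V) = d(U^b, V^b), where U^b and V^b are the restricted bounded t-structures on the common subcategory U_ℕ = V_ℕ. -/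
open CategoryTheory Category Limits Pretriangulated Triangulated

namespace TStructurePaper

variable {C : Type*} [Category C] [Preadditive C] [HasZeroObject C]
  [HasShift C ℤ] [∀ (n : ℤ), (shiftFunctor C n).Additive] [Pretriangulated C]

/-- `d(U^b, V^b) ≤ d` for the restricted bounded t-structures on the common subcategory
`T^b = U_ℕ = V_ℕ`: there is an integer `m` with `V^b_{≤m} ⊆ U^b_{≤0} ⊆ V^b_{≤m+d}`,
the inclusions being among objects of `T^b`. -/
def DistAtMostB (u v : TStructure C) (d : ℕ) : Prop :=
  ∃ m : ℤ, (∀ X : C, InUN u X → v.le m X → u.le 0 X) ∧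
           (∀ X : C, InUN u X → u.le 0 X → v.le (m + d) X)

/-- The distance `d(U^b, V^b)` between the restricted bounded t-structures, computed in
the subcategory `T^b = U_ℕ`. -/
noncomputable def distB (u v : TStructure C) : ℕ∞ :=
  sInf {e : ℕ∞ | ∃ d : ℕ, e = d ∧ DistAtMostB u v d}

/-!
The inequality `d(U^b, V^b) ≤ d(U, V)` is immediate. Conversely, when `d(U, V) < ∞` the aisles
`U_{≤0}` and `V_{≤m}` are each contained in a shift of the other. Truncating `X` for `U` in a very
negative degree `N` gives a triangle `A → X → B → ΣA` with `A` deep in both aisles and `B ∈ U_ℕ`,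
so an inclusion of aisles tested on `U_ℕ` applies to `B` and passes to `X`, because aisles are
closed under extensions.
-/

lemma le_le_of_le_of_sub_le {s t : TStructure C} {a b a' b' : ℤ} (h : s.le a ≤ t.le b)
    (h' : a' - a ≤ b' - b) : s.le a' ≤ t.le b' := by
  intro X hX
  have hX' : t.le (b + (a' - a)) X := by
    rw [← t.shift_le (a' - a) b _ (by omega)]
    exact (ObjectProperty.prop_shift_iff _ _ _).2 (h _ (s.le_shift a' (a' - a) a (by omega) X hX))
  exact t.le_monotone (by omega) X hX'

lemma exists_triangle_inUN_of_le (t : TStructure C) {X : C} {k : ℤ} (hX : t.le k X)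
    (N : ℤ) (hN : N ≤ k + 1) :
    ∃ (A B : C) (_ : t.le N A) (_ : InUN t B) (_ : t.le k B)
      (f : A ⟶ X) (g : X ⟶ B) (w : B ⟶ A⟦(1 : ℤ)⟧), Triangle.mk f g w ∈ distTriang C := by
  obtain ⟨A, B, hA, hB, f, g, w, mem⟩ := t.exists_triangle X N (N + 1) rfl
  have hBk : t.le k B := by
    rw [t.le_iff_isLE, t.isLE_iff_orthogonal k (k + 1) rfl]
    intro W φ hW
    obtain ⟨ψ, rfl⟩ := Triangle.yoneda_exact₃ _ mem φ
      (t.zero_of_isLE_of_isGE _ k (k + 1) (by omega) ⟨hX⟩ hW)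
    rw [t.zero_of_isLE_of_isGE ψ (N - 1) (k + 1) (by omega)
      ⟨t.le_shift N 1 (N - 1) (by omega) A hA⟩ hW]
    exact comp_zero
  refine ⟨A, B, hA, ⟨(max k (-(N + 1))).toNat, t.ge_antitone ?_ B hB, t.le_monotone ?_ B hBk⟩,
    hBk, f, g, w, mem⟩ <;> omega

variable {u v : TStructure C}

lemma le_le_zero_of_forall_inUN {m' c m : ℤ} (h₁ : v.le m' ≤ u.le 0) (h₂ : u.le 0 ≤ v.le c)
    (hb : ∀ X : C, InUN u X → v.le m X → u.le 0 X) : v.le m ≤ u.le 0 := by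
  intro X hX
  have hXk : u.le (max 0 (m - m')) X := le_le_of_le_of_sub_le h₁ (by omega) X hX
  obtain ⟨A, B, hA, hB, -, _, _, _, mem⟩ :=
    exists_triangle_inUN_of_le u hXk (min 0 (m + 1 - c)) (by omega)
  have hAv : v.le (m + 1) A := le_le_of_le_of_sub_le h₂ (by omega) A hA
  have hBv : v.le m B := (v.isLE₂ _ (rot_of_distTriang _ mem) m ⟨hX⟩
    ⟨v.le_shift (m + 1) 1 m (by omega) A hAv⟩).le
  exact (u.isLE₂ _ mem 0 ⟨u.le_monotone (by omega) A hA⟩ ⟨hb B hB hBv⟩).le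

lemma le_zero_le_of_forall_inUN {c n : ℤ} (h₂ : u.le 0 ≤ v.le c)
    (hb : ∀ X : C, InUN u X → u.le 0 X → v.le n X) : u.le 0 ≤ v.le n := by
  intro X hX
  obtain ⟨A, B, hA, hB, hB₀, _, _, _, mem⟩ :=
    exists_triangle_inUN_of_le u hX (min 0 (n - c)) (by omega)
  exact (v.isLE₂ _ mem n ⟨le_le_of_le_of_sub_le h₂ (by omega) A hA⟩ ⟨hb B hB hB₀⟩).le

lemma distAtMost_iff_distAtMostB {d' d : ℕ} (h : DistAtMost u v d') :
    DistAtMost u v d ↔ DistAtMostB u v d := by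
  obtain ⟨m', h₁, h₂⟩ := h
  constructor
  · rintro ⟨m, hm₁, hm₂⟩
    exact ⟨m, fun X _ ↦ hm₁ X, fun X _ ↦ hm₂ X⟩
  · rintro ⟨m, hm₁, hm₂⟩
    exact ⟨m, le_le_zero_of_forall_inUN h₁ h₂ hm₁, le_zero_le_of_forall_inUN h₂ hm₂⟩

lemma exists_distAtMost_of_dist_lt_top (h : dist u v < ⊤) : ∃ d, DistAtMost u v d := by
  by_contra! hd
  refine h.ne (sInf_eq_top.2 ?_)
  rintro _ ⟨d, -, hd'⟩
  exact absurd hd' (hd d)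

/-- If `d(U,V) < +∞`, then `d(U,V) = d(U^b, V^b)`. -/
theorem statement17 (u v : TStructure C) (h : dist u v < ⊤) :
    dist u v = distB u v := by
  obtain ⟨d', hd'⟩ := exists_distAtMost_of_dist_lt_top h
  simp only [dist, distB, distAtMost_iff_distAtMostB hd']

end TStructurePaper
end
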